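/- Let G = (V, E) be a finite simple undirected graph with |V| = n, and let D(G) be the two-layer DAG with first layer L₁ = V and second layer L₂ constructed as follows: for each unordered pair {u,v} of distinct vertices of V, if {u,v} ∈ E add one vertex to L₂ with directed edges from both u and v to it, and if {u,v} ∉ E add two vertices to L₂, one with a directed edge from u and one with a directed edge from v; all edge weights and all (fixed) thresholds equal 1/2. Then in the deterministic linear influence process on D(G), for every seed set S ⊆ L₁ the size of the final activated set equals σ(S) = n·|S| − |{ {u,v} ∈ E : u ∈ S and v ∈ S }|; consequently σ(S) ≥ n·|S| if and only if S is an independent set of G. -/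

import Mathlib

open Finset
open scoped Classical

/-- The final activated set of the (deterministic) linear influence process on a
weighted digraph with weights `wt`, thresholds `θ` and direct influences `x`:
starting from `∅`, a vertex `v` activates once the total weight of edges from the
active set into `v` plus `x v` reaches `θ v`; the process runs for `|W|` rounds. -/
noncomputable def finalSet {W : Type*} [Fintype W] (wt : W → W → ℝ) (θ x : W → ℝ) :
    Finset W :=
  (fun S => S ∪ Finset.univ.filter (fun v => θ v ≤ (∑ u ∈ S, wt u v) + x v))^[Fintype.card W] ∅

/-- Vertex set of the two-layer DAG `D(G)` built from a simple graph `G`: the first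
layer is `V`; the second layer has one vertex for each edge `{u,v} ∈ E` (with edges
from both `u` and `v` into it) and, for each non-adjacent pair `{u,v}`, two vertices,
one receiving an edge from `u` and one from `v` (encoded by ordered pairs). -/
abbrev TwoLayer {V : Type*} [Fintype V] [DecidableEq V]
    (G : SimpleGraph V) [DecidableRel G.Adj] : Type _ :=
  V ⊕ ({e : Sym2 V // e ∈ G.edgeFinset} ⊕ {p : V × V // p.1 ≠ p.2 ∧ ¬ G.Adj p.1 p.2})

/-- All edges of `D(G)` have weight `1/2`. -/
noncomputable def dagWeight {V : Type*} [Fintype V] [DecidableEq V]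
    (G : SimpleGraph V) [DecidableRel G.Adj] :
    TwoLayer G → TwoLayer G → ℝ
  | Sum.inl u, Sum.inr (Sum.inl e) => if u ∈ e.val then (1 : ℝ) / 2 else 0
  | Sum.inl u, Sum.inr (Sum.inr p) => if u = p.val.1 then (1 : ℝ) / 2 else 0
  | _, _ => 0

/-- The size of the final activated set of the deterministic linear influence
process on `D(G)` (all thresholds `1/2`) started from the seed set `Seed`. -/
noncomputable def sigmaDag {V : Type*} [Fintype V] [DecidableEq V]
    (G : SimpleGraph V) [DecidableRel G.Adj] (Seed : Finset (TwoLayer G)) : ℕ :=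
  (finalSet (dagWeight G) (fun _ => (1 : ℝ) / 2)
    (fun z => if z ∈ Seed then (1 : ℝ) else 0)).card

/-!
Only first-layer vertices carry outgoing weight, so a second-layer vertex reaches its threshold
`1/2` as soon as one of its in-neighbours is seeded: from the seed `S` the process is stable after
two rounds, at `S` together with the out-neighbourhood of `S`. In that out-neighbourhood every
non-adjacent ordered pair `(a, b)` with `a ∈ S` has a private vertex, while an edge contributes a
single vertex however many of its endpoints are seeded. Hence summing
`n = 1 + deg a + degᶜ a` over `a ∈ S` counts every activated vertex once, plus once more for each
edge with both endpoints in `S`.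
-/

namespace Finset

variable {W : Type*} [Fintype W] {F : Finset W → Finset W}

lemma le_card_iterate_empty (hF : ∀ s, s ⊆ F s)
    (hnot : ¬ Function.IsFixedPt F (F^[Fintype.card W] ∅)) {k : ℕ}
    (hk : k ≤ Fintype.card W + 1) :
    k ≤ #(F^[k] ∅) := by
  induction k with
  | zero => exact Nat.zero_le _
  | succ k ih =>
    have hstrict : F^[k] ∅ ⊂ F^[k + 1] ∅ := by
      rw [Function.iterate_succ_apply']
      refine (hF _).ssubset_of_ne fun hfix => hnot ?_
      obtain ⟨m, hm⟩ := Nat.exists_eq_add_of_le (Nat.le_of_succ_le_succ hk)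
      rw [hm, add_comm, Function.iterate_add_apply, (Function.IsFixedPt.iterate hfix.symm m).eq]
      exact hfix.symm
    exact (ih (by omega)).trans_lt (card_lt_card hstrict)

lemma isFixedPt_iterate_card_empty (hF : ∀ s, s ⊆ F s) :
    Function.IsFixedPt F (F^[Fintype.card W] ∅) := by
  by_contra hnot
  have := le_card_iterate_empty hF hnot le_rfl
  have := card_le_univ (F^[Fintype.card W + 1] ∅)
  omega

lemma iterate_card_empty_eq (hF : ∀ s, s ⊆ F s) {k : ℕ} {A : Finset W}
    (hk : F^[k] ∅ = A) (hA : Function.IsFixedPt F A) : F^[Fintype.card W] ∅ = A := by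
  have hP := (isFixedPt_iterate_card_empty hF).iterate k
  rw [← hP.eq, ← Function.iterate_add_apply, add_comm, Function.iterate_add_apply, hk,
    (hA.iterate _).eq]

end Finset

section LinearInfluence

variable {W : Type*} [Fintype W]

noncomputable def activationStep (wt : W → W → ℝ) (θ x : W → ℝ) : Finset W → Finset W :=
  fun S => S ∪ Finset.univ.filter (fun v => θ v ≤ (∑ u ∈ S, wt u v) + x v)

lemma subset_activationStep (wt : W → W → ℝ) (θ x : W → ℝ) (S : Finset W) :
    S ⊆ activationStep wt θ x S :=
  subset_union_left

lemma finalSet_eq_of_iterate_eq {wt : W → W → ℝ} {θ x : W → ℝ} {k : ℕ} {A : Finset W}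
    (hk : (activationStep wt θ x)^[k] ∅ = A) (hA : activationStep wt θ x A = A) :
    finalSet wt θ x = A :=
  iterate_card_empty_eq (subset_activationStep wt θ x) hk hA

end LinearInfluence

lemma half_le_sum_ite_half_iff {ι : Type*} (s : Finset ι) (p : ι → Prop) [DecidablePred p] :
    (1 / 2 : ℝ) ≤ ∑ i ∈ s, (if p i then 1 / 2 else 0) ↔ ∃ i ∈ s, p i := by
  rw [sum_ite, sum_const_zero, add_zero, sum_const, nsmul_eq_mul, ← filter_nonempty_iff,
    ← card_pos]
  constructor
  · intro h
    have : (1 : ℝ) ≤ #(s.filter p) := by linarith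
    exact_mod_cast this
  · intro h
    have : (1 : ℝ) ≤ #(s.filter p) := by exact_mod_cast h
    linarith

-- Generic in the decidability instance, which differs according to whether `V` is a `Fintype`.
lemma Sym2.card_filter_mem_of_not_isDiag {V : Type*} [DecidableEq V] (S : Finset V)
    {e : Sym2 V} [Decidable (∀ u ∈ e, u ∈ S)] (he : ¬ e.IsDiag) :
    #(S.filter (· ∈ e)) =
      (if ∃ u ∈ S, u ∈ e then 1 else 0) + (if ∀ u ∈ e, u ∈ S then 1 else 0) := by
  obtain ⟨a, b, rfl⟩ : ∃ a b, e = s(a, b) := Sym2.exists.mp ⟨e, rfl⟩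
  have hab : a ≠ b := fun h => he (Sym2.mk_isDiag_iff.mpr h)
  have hex : (∃ u ∈ S, u ∈ s(a, b)) ↔ a ∈ S ∨ b ∈ S := by simp [and_or_left, exists_or]
  have hall : (∀ u ∈ s(a, b), u ∈ S) ↔ a ∈ S ∧ b ∈ S := by simp
  rw [if_congr hex rfl rfl, if_congr hall rfl rfl]
  simp only [Sym2.mem_iff, filter_or, filter_eq']
  by_cases ha : a ∈ S <;> by_cases hb : b ∈ S <;> simp [ha, hb, hab]

namespace SimpleGraph

variable {V : Type*} [Fintype V] [DecidableEq V] (G : SimpleGraph V) [DecidableRel G.Adj]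

lemma degree_add_degree_compl_add_one (v : V) :
    G.degree v + Gᶜ.degree v + 1 = Fintype.card V := by
  have := G.degree_lt_card_verts v
  rw [degree_compl]
  omega

lemma sum_degree_eq_card_filter_exists_add_card_filter_forall (S : Finset V) :
    ∑ v ∈ S, G.degree v =
      #(G.edgeFinset.filter (fun e => ∃ u ∈ S, u ∈ e)) +
        #(G.edgeFinset.filter (fun e => ∀ u ∈ e, u ∈ S)) := by
  calc ∑ v ∈ S, G.degree v
      = ∑ v ∈ S, #(G.edgeFinset.bipartiteAbove (· ∈ ·) v) := by
        simp only [← card_incidenceFinset_eq_degree, incidenceFinset_eq_filter]; rfl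
    _ = ∑ e ∈ G.edgeFinset, #(S.bipartiteBelow (· ∈ ·) e) :=
        sum_card_bipartiteAbove_eq_sum_card_bipartiteBelow _
    _ = ∑ e ∈ G.edgeFinset,
          ((if ∃ u ∈ S, u ∈ e then 1 else 0) + (if ∀ u ∈ e, u ∈ S then 1 else 0)) :=
        sum_congr rfl fun e he => Sym2.card_filter_mem_of_not_isDiag S
          (G.not_isDiag_of_mem_edgeSet (mem_edgeFinset.mp he))
    _ = _ := by rw [sum_add_distrib, sum_boole, sum_boole]; rfl

lemma sum_degree_compl_eq (S : Finset V) :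
    ∑ v ∈ S, Gᶜ.degree v = #((S ×ˢ univ).filter fun p : V × V => Gᶜ.Adj p.1 p.2) := by
  rw [card_filter, sum_product]
  refine sum_congr rfl fun v _ => ?_
  rw [← card_neighborFinset_eq_degree, neighborFinset_eq_filter, card_filter]

lemma card_filter_edgeFinset_forall_mem_eq_zero_iff (S : Finset V) :
    #(G.edgeFinset.filter (fun e => ∀ u ∈ e, u ∈ S)) = 0 ↔ ∀ u ∈ S, ∀ v ∈ S, ¬ G.Adj u v := by
  simp only [card_eq_zero, filter_eq_empty_iff, Sym2.forall, mem_edgeFinset, mem_edgeSet]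
  refine ⟨fun h u hu v hv huv => h u v huv ?_, fun h x y hxy hxyS => ?_⟩
  · intro w hw
    rcases Sym2.mem_iff.1 hw with rfl | rfl <;> assumption
  · exact h x (hxyS x (Sym2.mem_mk_left x y)) y (hxyS y (Sym2.mem_mk_right x y)) hxy

end SimpleGraph

namespace TwoLayer

variable {V : Type*} [Fintype V] [DecidableEq V] {G : SimpleGraph V} [DecidableRel G.Adj]

def Adj (u : V) : TwoLayer G → Prop :=
  Sum.elim (fun _ => False) (Sum.elim (fun e => u ∈ e.val) (fun p => u = p.val.1))

lemma dagWeight_inl (u : V) (z : TwoLayer G) :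
    dagWeight G (Sum.inl u) z = if Adj u z then 1 / 2 else 0 := by
  rcases z with v | e | p <;> simp [dagWeight, Adj]

lemma dagWeight_inr
    (a : {e : Sym2 V // e ∈ G.edgeFinset} ⊕ {p : V × V // p.1 ≠ p.2 ∧ ¬ G.Adj p.1 p.2})
    (z : TwoLayer G) : dagWeight G (Sum.inr a) z = 0 := by
  rcases z with v | e | p <;> rfl

lemma dagWeight_nonneg (u z : TwoLayer G) : 0 ≤ dagWeight G u z := by
  rcases u with u | a
  · rw [dagWeight_inl]; split_ifs <;> norm_num
  · rw [dagWeight_inr]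

lemma half_le_sum_dagWeight_iff (T : Finset (TwoLayer G)) (z : TwoLayer G) :
    (1 / 2 : ℝ) ≤ ∑ u ∈ T, dagWeight G u z ↔ ∃ u ∈ T.toLeft, Adj u z := by
  simp only [sum_sum_eq_sum_toLeft_add_sum_toRight, dagWeight_inl, dagWeight_inr,
    sum_const_zero, add_zero]
  exact half_le_sum_ite_half_iff _ _

variable (G) in
noncomputable def outNbhd (S : Finset V) : Finset (TwoLayer G) :=
  univ.filter fun z => ∃ u ∈ S, Adj u z

lemma mem_outNbhd {S : Finset V} {z : TwoLayer G} :
    z ∈ outNbhd G S ↔ ∃ u ∈ S, Adj u z := by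
  rw [outNbhd, mem_filter, and_iff_right (mem_univ z)]

lemma toLeft_outNbhd (S : Finset V) : (outNbhd G S).toLeft = ∅ := by
  ext u
  simp [mem_outNbhd, Adj]

lemma activationStep_dagWeight (Seed T : Finset (TwoLayer G)) :
    activationStep (dagWeight G) (fun _ => 1 / 2) (fun z => if z ∈ Seed then 1 else 0) T =
      T ∪ Seed ∪ outNbhd G T.toLeft := by
  ext z
  have hsum : 0 ≤ ∑ u ∈ T, dagWeight G u z := sum_nonneg fun u _ => dagWeight_nonneg u z
  simp only [activationStep, outNbhd, mem_union, mem_filter, mem_univ, true_and,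
    ← half_le_sum_dagWeight_iff]
  split_ifs with hz
  · simp only [hz, true_or, or_true, iff_true]
    right
    linarith
  · simp [hz]

lemma toLeft_image_inl (S : Finset V) : (S.image Sum.inl : Finset (TwoLayer G)).toLeft = S := by
  ext; simp

lemma outNbhd_empty : outNbhd G (∅ : Finset V) = ∅ := by
  ext; simp [mem_outNbhd]

lemma finalSet_image_inl (S : Finset V) :
    finalSet (dagWeight G) (fun _ => 1 / 2) (fun z => if z ∈ S.image Sum.inl then 1 else 0) =
      S.image Sum.inl ∪ outNbhd G S := by
  have hseed : activationStep (dagWeight G) (fun _ => 1 / 2)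
      (fun z => if z ∈ S.image Sum.inl then 1 else 0) ∅ = S.image Sum.inl := by
    have : (∅ : Finset (TwoLayer G)).toLeft = ∅ := by ext; simp
    rw [activationStep_dagWeight, this, outNbhd_empty, empty_union, union_empty]
  apply finalSet_eq_of_iterate_eq (k := 2)
  · rw [Function.iterate_succ_apply', Function.iterate_one, hseed, activationStep_dagWeight,
      toLeft_image_inl, union_self]
  · rw [activationStep_dagWeight, toLeft_union, toLeft_image_inl, toLeft_outNbhd, union_empty]
    ext
    simp only [mem_union]
    tauto

lemma card_outNbhd (S : Finset V) :
    #(outNbhd G S) =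
      #(G.edgeFinset.filter (fun e => ∃ u ∈ S, u ∈ e)) + ∑ v ∈ S, Gᶜ.degree v := by
  rw [← card_toLeft_add_card_toRight, toLeft_outNbhd, card_empty, zero_add,
    ← card_toLeft_add_card_toRight, G.sum_degree_compl_eq]
  congr 1
  · rw [← card_map (Function.Embedding.subtype _)]
    congr 1
    ext e
    simp [mem_outNbhd, Adj, and_comm]
  · rw [← card_map (Function.Embedding.subtype _)]
    congr 1
    ext p
    simp [mem_outNbhd, Adj]

lemma sigmaDag_image_inl_add_card_filter_forall (S : Finset V) :
    sigmaDag G (S.image Sum.inl) + #(G.edgeFinset.filter (fun e => ∀ u ∈ e, u ∈ S)) =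
      Fintype.card V * #S := by
  have hdisj : Disjoint (S.image Sum.inl) (outNbhd G S) := by
    refine disjoint_left.2 fun z hz hR => ?_
    obtain ⟨u, -, rfl⟩ := mem_image.1 hz
    simpa [toLeft_outNbhd] using mem_toLeft.2 hR
  have hdeg : ∑ v ∈ S, (G.degree v + Gᶜ.degree v + 1) = Fintype.card V * #S := by
    simp [G.degree_add_degree_compl_add_one, mul_comm]
  rw [sum_add_distrib, sum_add_distrib,
    G.sum_degree_eq_card_filter_exists_add_card_filter_forall] at hdeg
  rw [sigmaDag, finalSet_image_inl, card_union_of_disjoint hdisj,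
    card_image_of_injective _ Sum.inl_injective, card_outNbhd]
  simp only [sum_const, smul_eq_mul, mul_one] at hdeg
  omega

end TwoLayer

/-- For every seed set `S` contained in the first layer of `D(G)`,
`σ(S) = n |S| - #{edges of G inside S}`; consequently `σ(S) ≥ n |S|` iff `S` is an
independent set of `G`. -/
theorem stmt14 {V : Type*} [Fintype V] [DecidableEq V]
    (G : SimpleGraph V) [DecidableRel G.Adj] (S : Finset V) :
    ((sigmaDag G (S.image Sum.inl) : ℤ) =
        (Fintype.card V : ℤ) * S.card -
          ((G.edgeFinset.filter (fun e => ∀ u ∈ e, u ∈ S)).card : ℤ)) ∧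
    (Fintype.card V * S.card ≤ sigmaDag G (S.image Sum.inl) ↔
      ∀ u ∈ S, ∀ v ∈ S, ¬ G.Adj u v) := by
  have hsum := TwoLayer.sigmaDag_image_inl_add_card_filter_forall (G := G) S
  refine ⟨?_, ?_⟩
  · rw [eq_sub_iff_add_eq]
    exact_mod_cast hsum
  · rw [← G.card_filter_edgeFinset_forall_mem_eq_zero_iff S]
    omega
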